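/- Let F = f^⊕ and G = g^⊕ be cyclically symmetric homogeneous polynomials of degrees r' and r'' respectively, with seed f of class D(C_f, σ') and seed g of class D(C_g, σ''), where σ' ≠ σ''. Then the Poisson bracket {F,G} admits a seed of class D(C_h, min(σ',σ'')) with C_h = r' r'' C_f C_g / ((1 − e^{−max(σ',σ'')})(1 − e^{−|σ'−σ''|})). -/

import Mathlib

open MvPolynomial

/-- Polynomials in the `2N` phase-space variables `x_0,…,x_{N−1},y_0,…,y_{N−1}`:
`Sum.inl l` is the variable `x_l` and `Sum.inr l` is `y_l`. -/
abbrev Pol (N : ℕ) := MvPolynomial (Fin N ⊕ Fin N) ℝ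

/-- Poisson bracket `{f,g} = Σ_l (∂f/∂x_l ∂g/∂y_l − ∂f/∂y_l ∂g/∂x_l)`. -/
noncomputable def pbracket {N : ℕ} (f g : Pol N) : Pol N :=
  ∑ l : Fin N,
    (pderiv (Sum.inl l) f * pderiv (Sum.inr l) g -
      pderiv (Sum.inr l) f * pderiv (Sum.inl l) g)

/-- Polynomial norm: the sum of the absolute values of the coefficients. -/
noncomputable def pnorm {N : ℕ} (f : Pol N) : ℝ :=
  ∑ d ∈ f.support, |coeff d f|

/-- Action of the cyclic permutation `τ` on polynomials: `(τ f)(x,y) = f(τx, τy)`,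
where `(τ x)_j = x_{j+1 mod N}`. -/
noncomputable def cshiftP {N : ℕ} (f : Pol N) : Pol N :=
  rename (Sum.map (finRotate N : Fin N → Fin N) (finRotate N : Fin N → Fin N)) f

/-- The extensive function generated by a seed: `f^⊕ = Σ_{l=1}^N τ^l f`. -/
noncomputable def oplus {N : ℕ} (f : Pol N) : Pol N :=
  ∑ l ∈ Finset.Icc 1 N, cshiftP^[l] f

/-- Set of sites appearing (in `x` or `y`) with nonzero exponent in a monomial. -/
def siteSupport {N : ℕ} (d : (Fin N ⊕ Fin N) →₀ ℕ) : Finset (Fin N) :=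
  Finset.univ.filter fun l => d (Sum.inl l) ≠ 0 ∨ d (Sum.inr l) ≠ 0

/-- `f` is left aligned with interaction range at most `m`: every monomial of `f`
involves only the sites `0,…,m`. -/
def RangeLE {N : ℕ} (m : ℕ) (f : Pol N) : Prop :=
  ∀ d ∈ f.support, ∀ l ∈ siteSupport d, (l : ℕ) ≤ m

/-- `F` is a decomposition `f = Σ_{m≥0} f^{(m)}` of the seed `f` into left-aligned
components of increasing interaction range (truncated at `m = N` on the periodic chain). -/
def IsDecomp {N : ℕ} (f : Pol N) (F : ℕ → Pol N) : Prop :=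
  f = ∑ m ∈ Finset.range (N + 1), F m ∧ ∀ m, RangeLE m (F m)

/-- Exponential decay `‖f^{(m)}‖ ≤ C e^{−σm}` of the components of a decomposition. -/
def Decay {N : ℕ} (C σ : ℝ) (F : ℕ → Pol N) : Prop :=
  ∀ m : ℕ, pnorm (F m) ≤ C * Real.exp (-σ * m)

/-- A seed `f` is of class `D(C,σ)` if it admits a decomposition `f = Σ_m f^{(m)}`
into left-aligned components of interaction range at most `m` with `‖f^{(m)}‖ ≤ C e^{−σm}`. -/
def SeedClassD {N : ℕ} (C σ : ℝ) (f : Pol N) : Prop :=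
  ∃ F : ℕ → Pol N, IsDecomp f F ∧ Decay C σ F

/-!
Decompose the seeds as `f = Σ_a f⁽ᵃ⁾` and `g = Σ_b g⁽ᵇ⁾`. Then `{f^⊕, g^⊕}` has the seed
`Σ_{a,b} Σ_l {f⁽ᵃ⁾, τ^l g⁽ᵇ⁾}`. Each bracket vanishes unless the supports of `f⁽ᵃ⁾` and
`τ^l g⁽ᵇ⁾` overlap, and then a cyclic shift, which does not change `⊕`, left-aligns it with
interaction range at most `a + b`; it is put into the component of range `min (a + b) N`.
By Euler's identity, `Σ_l ‖{p, τ^l q}‖ ≤ r' r'' ‖p‖ ‖q‖`, so the `m`-th component has norm at most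
`r' r'' C_f C_g Σ e^{-σ' a - σ'' b}` over `a + b = m` (or `a + b ≥ N` when `m = N`). With
`x = e^{-min(σ',σ'')}` and `y = e^{-max(σ',σ'')}` this is a geometric sum in `y / x` and one in `y`,
at most `x^m / ((1 - y)(1 - y / x))`.
-/

theorem Function.Periodic.sum_range_add {M : Type*} [AddCommGroup M] {u : ℕ → M} {N : ℕ}
    (hu : Function.Periodic u N) (s : ℕ) :
    ∑ l ∈ Finset.range N, u (s + l) = ∑ l ∈ Finset.range N, u l := by
  induction s with
  | zero => simp
  | succ s ih =>
    have h := (Finset.sum_range_succ' (fun l => u (s + l)) N).symm.trans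
      (Finset.sum_range_succ (fun l => u (s + l)) N)
    rw [add_zero, hu s, add_left_inj] at h
    rw [← ih, ← h]
    exact Finset.sum_congr rfl fun l _ => by rw [Nat.add_right_comm, Nat.add_assoc]

lemma MvPolynomial.pderiv_mem_supported {σ R : Type*} [CommSemiring R] {s : Set σ}
    {p : MvPolynomial σ R} (hp : p ∈ supported R s) (i : σ) : pderiv i p ∈ supported R s := by
  induction hp using Algebra.adjoin_induction with
  | mem x hx =>
    obtain ⟨j, -, rfl⟩ := hx
    rcases eq_or_ne j i with rfl | hji
    · rw [pderiv_X_self]; exact one_mem _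
    · rw [pderiv_X_of_ne hji]; exact zero_mem _
  | algebraMap r => rw [algebraMap_eq, pderiv_C]; exact zero_mem _
  | add x y _ _ hx hy => rw [map_add]; exact add_mem hx hy
  | mul x y hx' hy' hx hy =>
    rw [Derivation.leibniz, smul_eq_mul, smul_eq_mul]
    exact add_mem (mul_mem hx' hy) (mul_mem hy' hx)

lemma MvPolynomial.homogeneousComponent_mem_supported {σ R : Type*} [CommSemiring R]
    {s : Set σ} {p : MvPolynomial σ R} (hp : p ∈ supported R s) (n : ℕ) :
    homogeneousComponent n p ∈ supported R s := by
  rw [mem_supported] at hp ⊢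
  intro v hv
  obtain ⟨d, hd, hvd⟩ := (mem_vars_iff_mem_support v).mp hv
  rw [support_homogeneousComponent, Finset.mem_filter] at hd
  exact hp ((mem_vars_iff_mem_support v).mpr ⟨d, hd.1, hvd⟩)

namespace PoissonSeed

open Finset Fin.NatCast

variable {N : ℕ}

section Norm

lemma pnorm_nonneg (p : Pol N) : 0 ≤ pnorm p :=
  sum_nonneg fun _ _ => abs_nonneg _

lemma pnorm_eq_sum_of_support_subset {p : Pol N} {s : Finset ((Fin N ⊕ Fin N) →₀ ℕ)}
    (h : p.support ⊆ s) : pnorm p = ∑ d ∈ s, |coeff d p| :=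
  sum_subset h fun d _ hd => by rw [notMem_support_iff.mp hd, abs_zero]

lemma pnorm_add_le (p q : Pol N) : pnorm (p + q) ≤ pnorm p + pnorm q := by
  classical
  rw [pnorm_eq_sum_of_support_subset (s := p.support ∪ q.support) support_add,
    pnorm_eq_sum_of_support_subset (s := p.support ∪ q.support) subset_union_left,
    pnorm_eq_sum_of_support_subset (s := p.support ∪ q.support) subset_union_right,
    ← sum_add_distrib]
  exact sum_le_sum fun d _ => by rw [coeff_add]; exact abs_add_le _ _

lemma pnorm_neg (p : Pol N) : pnorm (-p) = pnorm p := by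
  simp [pnorm, support_neg]

lemma pnorm_sub_le (p q : Pol N) : pnorm (p - q) ≤ pnorm p + pnorm q := by
  simpa [sub_eq_add_neg, pnorm_neg] using pnorm_add_le p (-q)

lemma pnorm_sum_le {α : Type*} (s : Finset α) (p : α → Pol N) :
    pnorm (∑ a ∈ s, p a) ≤ ∑ a ∈ s, pnorm (p a) := by
  classical
  induction s using Finset.induction_on with
  | empty => simp [pnorm]
  | insert a s ha ih =>
    rw [sum_insert ha, sum_insert ha]
    exact (pnorm_add_le _ _).trans (add_le_add_right ih _)

lemma pnorm_monomial_le (d : (Fin N ⊕ Fin N) →₀ ℕ) (c : ℝ) : pnorm (monomial d c) ≤ |c| := by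
  classical
  rw [pnorm_eq_sum_of_support_subset (support_monomial_subset (a := c) (s := d))]
  simp

lemma pnorm_mul_le (p q : Pol N) : pnorm (p * q) ≤ pnorm p * pnorm q := by
  conv_lhs => rw [p.as_sum, q.as_sum, sum_mul_sum]
  refine (pnorm_sum_le _ _).trans ?_
  rw [pnorm, pnorm, sum_mul_sum]
  refine sum_le_sum fun u _ => (pnorm_sum_le _ _).trans (sum_le_sum fun v _ => ?_)
  rw [monomial_mul, ← abs_mul]
  exact pnorm_monomial_le _ _

lemma pnorm_rename_le (f : Fin N ⊕ Fin N → Fin N ⊕ Fin N) (p : Pol N) :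
    pnorm (rename f p) ≤ pnorm p := by
  conv_lhs => rw [p.as_sum, map_sum]
  refine (pnorm_sum_le _ _).trans (sum_le_sum fun d _ => ?_)
  rw [rename_monomial]
  exact pnorm_monomial_le _ _

lemma pnorm_homogeneousComponent_le (n : ℕ) (p : Pol N) :
    pnorm (homogeneousComponent n p) ≤ pnorm p := by
  rw [pnorm, support_homogeneousComponent, sum_filter]
  refine sum_le_sum fun d _ => ?_
  split_ifs with hd
  · rw [coeff_homogeneousComponent, if_pos hd]
  · exact abs_nonneg _

lemma pnorm_pderiv_le (v : Fin N ⊕ Fin N) (p : Pol N) :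
    pnorm (pderiv v p) ≤ ∑ d ∈ p.support, |coeff d p| * d v := by
  conv_lhs => rw [p.as_sum, map_sum]
  refine (pnorm_sum_le _ _).trans (sum_le_sum fun d _ => ?_)
  rw [pderiv_monomial]
  exact (pnorm_monomial_le _ _).trans_eq (by rw [abs_mul, Nat.abs_cast])

lemma sum_pnorm_pderiv_le {r : ℕ} {p : Pol N} (hp : p.IsHomogeneous r) :
    ∑ v, pnorm (pderiv v p) ≤ r * pnorm p := by
  refine (sum_le_sum fun v _ => pnorm_pderiv_le v p).trans_eq ?_
  rw [sum_comm, pnorm, mul_sum]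
  refine sum_congr rfl fun d hd => ?_
  have hdeg : ∑ v, d v = r := by
    rw [← hp (mem_support_iff.mp hd), Finsupp.weight_apply, Finsupp.sum_fintype _ _ (by simp)]
    simp
  rw [← mul_sum, ← Nat.cast_sum, hdeg, mul_comm]

end Norm

section Shift

noncomputable abbrev siteRename (π : Fin N → Fin N) : Pol N →ₐ[ℝ] Pol N := rename (Sum.map π π)

lemma cshiftP_iterate (k : ℕ) (p : Pol N) :
    cshiftP^[k] p = siteRename ((finRotate N)^[k]) p := by
  induction k with
  | zero => simp [siteRename]
  | succ k ih =>
    rw [Function.iterate_succ_apply', ih, cshiftP, rename_rename, Sum.map_comp_map,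
      Function.iterate_succ']

lemma finRotate_iterate_apply {n : ℕ} (l : ℕ) (i : Fin (n + 1)) :
    (finRotate (n + 1))^[l] i = i + (l : Fin (n + 1)) := by
  induction l with
  | zero => simp
  | succ l ih => rw [Function.iterate_succ_apply', ih, finRotate_apply, Nat.cast_succ, add_assoc]

lemma val_finRotate_iterate (l : ℕ) (i : Fin N) : ((finRotate N)^[l] i : ℕ) = (i + l) % N := by
  cases N with
  | zero => exact i.elim0
  | succ n => rw [finRotate_iterate_apply, Fin.val_add, Fin.val_natCast, Nat.add_mod_mod]

lemma finRotate_iterate_bijective (l : ℕ) : Function.Bijective (finRotate N)^[l] :=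
  (finRotate N).bijective.iterate l

lemma cshiftP_iterate_add_period (k : ℕ) (p : Pol N) : cshiftP^[k + N] p = cshiftP^[k] p := by
  have h : (finRotate N)^[N] = id := funext fun i => Fin.ext <| by
    rw [val_finRotate_iterate, Nat.add_mod_right, Nat.mod_eq_of_lt i.isLt, id]
  rw [Function.iterate_add_apply, cshiftP_iterate N, h, siteRename, Sum.map_id_id, rename_id,
    AlgHom.id_apply]

lemma periodic_cshiftP_iterate (p : Pol N) : Function.Periodic (fun k => cshiftP^[k] p) N :=
  fun k => cshiftP_iterate_add_period k p

lemma oplus_eq_sum_range (p : Pol N) : oplus p = ∑ l ∈ range N, cshiftP^[l] p := by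
  rw [oplus, ← Ico_add_one_right_eq_Icc, sum_Ico_eq_sum_range, Nat.add_sub_cancel]
  exact (periodic_cshiftP_iterate p).sum_range_add 1

lemma sum_range_cshiftP_iterate_add (s : ℕ) (p : Pol N) :
    ∑ l ∈ range N, cshiftP^[s + l] p = oplus p := by
  rw [oplus_eq_sum_range]
  exact (periodic_cshiftP_iterate p).sum_range_add s

lemma oplus_cshiftP_iterate (s : ℕ) (p : Pol N) : oplus (cshiftP^[s] p) = oplus p := by
  simp_rw [oplus_eq_sum_range, ← Function.iterate_add_apply, Nat.add_comm _ s]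
  exact (periodic_cshiftP_iterate p).sum_range_add s

lemma oplus_sum {α : Type*} (s : Finset α) (p : α → Pol N) :
    oplus (∑ a ∈ s, p a) = ∑ a ∈ s, oplus (p a) := by
  simp_rw [oplus_eq_sum_range, cshiftP_iterate, map_sum]
  exact sum_comm

end Shift

section Bracket

lemma pbracket_sum_left {α : Type*} (s : Finset α) (p : α → Pol N) (q : Pol N) :
    pbracket (∑ a ∈ s, p a) q = ∑ a ∈ s, pbracket (p a) q := by
  simp_rw [pbracket, map_sum, sum_mul, ← sum_sub_distrib]
  exact sum_comm

lemma pbracket_sum_right {α : Type*} (s : Finset α) (p : Pol N) (q : α → Pol N) :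
    pbracket p (∑ a ∈ s, q a) = ∑ a ∈ s, pbracket p (q a) := by
  simp_rw [pbracket, map_sum, mul_sum, ← sum_sub_distrib]
  exact sum_comm

lemma pderiv_siteRename {π : Fin N → Fin N} (hπ : π.Injective) (p : Pol N) (i : Fin N) :
    pderiv (Sum.inl (π i)) (siteRename π p) = siteRename π (pderiv (Sum.inl i) p) ∧
      pderiv (Sum.inr (π i)) (siteRename π p) = siteRename π (pderiv (Sum.inr i) p) :=
  ⟨pderiv_rename (hπ.sumMap hπ) (Sum.inl i) p, pderiv_rename (hπ.sumMap hπ) (Sum.inr i) p⟩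

lemma pbracket_siteRename {π : Fin N → Fin N} (hπ : π.Bijective) (p q : Pol N) :
    pbracket (siteRename π p) (siteRename π q) = siteRename π (pbracket p q) := by
  rw [pbracket, pbracket, map_sum, ← hπ.sum_comp]
  refine sum_congr rfl fun i _ => ?_
  obtain ⟨hpx, hpy⟩ := pderiv_siteRename hπ.injective p i
  obtain ⟨hqx, hqy⟩ := pderiv_siteRename hπ.injective q i
  rw [hpx, hpy, hqx, hqy, map_sub, map_mul, map_mul]

lemma pbracket_cshiftP_iterate (k : ℕ) (p q : Pol N) :
    pbracket (cshiftP^[k] p) (cshiftP^[k] q) = cshiftP^[k] (pbracket p q) := by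
  simp_rw [cshiftP_iterate]
  exact pbracket_siteRename (finRotate_iterate_bijective k) p q

lemma pbracket_oplus_oplus (f g : Pol N) :
    pbracket (oplus f) (oplus g) = oplus (∑ l ∈ range N, pbracket f (cshiftP^[l] g)) := by
  calc pbracket (oplus f) (oplus g)
      = ∑ k ∈ range N, ∑ l ∈ range N, pbracket (cshiftP^[k] f) (cshiftP^[k + l] g) := by
        rw [oplus_eq_sum_range f, pbracket_sum_left]
        refine sum_congr rfl fun k _ => ?_
        rw [← sum_range_cshiftP_iterate_add k g, pbracket_sum_right]
    _ = ∑ l ∈ range N, ∑ k ∈ range N, cshiftP^[k] (pbracket f (cshiftP^[l] g)) := by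
        rw [sum_comm]
        refine sum_congr rfl fun l _ => sum_congr rfl fun k _ => ?_
        rw [← pbracket_cshiftP_iterate, ← Function.iterate_add_apply]
    _ = oplus (∑ l ∈ range N, pbracket f (cshiftP^[l] g)) := by
        simp_rw [oplus_sum, oplus_eq_sum_range]

end Bracket

section Sites

noncomputable abbrev sitesSupported (S : Set (Fin N)) : Subalgebra ℝ (Pol N) :=
  supported ℝ (Sum.elim id id ⁻¹' S)

lemma sitesSupported_mono {S T : Set (Fin N)} (h : S ⊆ T) :
    sitesSupported S ≤ sitesSupported T :=
  supported_mono (Set.preimage_mono h)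

lemma sitesSupported_Icc_mono {lo hi lo' hi' : ℕ} (hlo : lo' ≤ lo) (hhi : hi ≤ hi') :
    sitesSupported (Fin.val ⁻¹' Set.Icc lo hi : Set (Fin N)) ≤
      sitesSupported (Fin.val ⁻¹' Set.Icc lo' hi') :=
  sitesSupported_mono (Set.preimage_mono (Set.Icc_subset_Icc hlo hhi))

lemma rangeLE_iff_mem_sitesSupported {m : ℕ} {p : Pol N} :
    RangeLE m p ↔ p ∈ sitesSupported (Fin.val ⁻¹' Set.Icc 0 m) := by
  simp only [RangeLE, siteSupport, mem_supported, Set.subset_def, mem_coe, mem_vars_iff_mem_support,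
    Finsupp.mem_support_iff, mem_filter, mem_univ, true_and]
  constructor
  · rintro h (j | j) ⟨d, hd, hj⟩ <;> simpa using h d hd j (by tauto)
  · rintro h d hd j (hj | hj)
    · simpa using h (Sum.inl j) ⟨d, hd, hj⟩
    · simpa using h (Sum.inr j) ⟨d, hd, hj⟩

lemma siteRename_mem_sitesSupported {π : Fin N → Fin N} {S T : Set (Fin N)}
    (hπ : Set.MapsTo π S T) {p : Pol N} (hp : p ∈ sitesSupported S) :
    siteRename π p ∈ sitesSupported T := by
  rw [mem_supported] at hp ⊢
  intro v hv
  obtain ⟨w, hw, rfl⟩ := mem_vars_rename _ _ hv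
  cases w with
  | inl j => exact hπ (hp hw)
  | inr j => exact hπ (hp hw)

lemma pbracket_mem_sitesSupported {S : Set (Fin N)} {p q : Pol N}
    (hp : p ∈ sitesSupported S) (hq : q ∈ sitesSupported S) :
    pbracket p q ∈ sitesSupported S :=
  sum_mem fun _ _ => sub_mem
    (mul_mem (pderiv_mem_supported hp _) (pderiv_mem_supported hq _))
    (mul_mem (pderiv_mem_supported hp _) (pderiv_mem_supported hq _))

lemma pderiv_eq_zero_of_notMem {S : Set (Fin N)} {p : Pol N} (hp : p ∈ sitesSupported S)
    {j : Fin N} (hj : j ∉ S) :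
    pderiv (Sum.inl j) p = 0 ∧ pderiv (Sum.inr j) p = 0 := by
  rw [mem_supported] at hp
  exact ⟨pderiv_eq_zero_of_notMem_vars fun h => hj (hp h),
    pderiv_eq_zero_of_notMem_vars fun h => hj (hp h)⟩

lemma pbracket_eq_zero_of_disjoint {S T : Set (Fin N)} (hST : Disjoint S T) {p q : Pol N}
    (hp : p ∈ sitesSupported S) (hq : q ∈ sitesSupported T) : pbracket p q = 0 := by
  refine sum_eq_zero fun j _ => ?_
  by_cases hj : j ∈ S
  · obtain ⟨hx, hy⟩ := pderiv_eq_zero_of_notMem hq (Set.disjoint_left.mp hST hj)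
    rw [hx, hy, mul_zero, mul_zero, sub_zero]
  · obtain ⟨hx, hy⟩ := pderiv_eq_zero_of_notMem hp hj
    rw [hx, hy, zero_mul, zero_mul, sub_zero]

lemma cshiftP_iterate_mem_sitesSupported_Icc {lo hi k : ℕ} (hk : hi + k < N) {p : Pol N}
    (hp : p ∈ sitesSupported (Fin.val ⁻¹' Set.Icc lo hi)) :
    cshiftP^[k] p ∈ sitesSupported (Fin.val ⁻¹' Set.Icc (lo + k) (hi + k)) := by
  rw [cshiftP_iterate]
  refine siteRename_mem_sitesSupported (fun i hi => ?_) hp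
  simp only [Set.mem_preimage, Set.mem_Icc] at hi ⊢
  rw [val_finRotate_iterate, Nat.mod_eq_of_lt (by omega)]
  omega

/-- The cyclic shift that left-aligns `{p, τ^l q}` when `p` has range `a`. -/
def alignShift (N a l : ℕ) : ℕ := if l ≤ a then 0 else N - l

lemma cshiftP_alignShift_pbracket_mem {a b l : ℕ} (hab : a + b < N) (hl : l < N) {p q : Pol N}
    (hp : p ∈ sitesSupported (Fin.val ⁻¹' Set.Icc 0 a))
    (hq : q ∈ sitesSupported (Fin.val ⁻¹' Set.Icc 0 b)) :
    cshiftP^[alignShift N a l] (pbracket p (cshiftP^[l] q)) ∈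
      sitesSupported (Fin.val ⁻¹' Set.Icc 0 (a + b)) := by
  unfold alignShift
  split_ifs with hla
  · have hq' := cshiftP_iterate_mem_sitesSupported_Icc (k := l) (by omega) hq
    exact pbracket_mem_sitesSupported (sitesSupported_Icc_mono le_rfl (by omega) hp)
      (sitesSupported_Icc_mono (Nat.zero_le _) (by omega) hq')
  by_cases hlb : N ≤ l + b
  · -- `τ^(N-l)` realigns `τ^l q` at the origin and moves `p` to `[N-l, N-l+a]`
    rw [← pbracket_cshiftP_iterate, ← Function.iterate_add_apply, Nat.sub_add_cancel hl.le,
      (periodic_cshiftP_iterate q).eq, Function.iterate_zero_apply]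
    have hp' := cshiftP_iterate_mem_sitesSupported_Icc (k := N - l) (by omega) hp
    exact pbracket_mem_sitesSupported (sitesSupported_Icc_mono (Nat.zero_le _) (by omega) hp')
      (sitesSupported_Icc_mono le_rfl (by omega) hq)
  · have hq' := cshiftP_iterate_mem_sitesSupported_Icc (k := l) (by omega) hq
    have hdisj : Disjoint (Fin.val ⁻¹' Set.Icc 0 a : Set (Fin N))
        (Fin.val ⁻¹' Set.Icc (0 + l) (b + l)) :=
      Set.disjoint_left.mpr fun i hi hi' => by
        simp only [Set.mem_preimage, Set.mem_Icc] at hi hi'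
        omega
    rw [pbracket_eq_zero_of_disjoint hdisj hp hq', cshiftP_iterate, map_zero]
    exact zero_mem _

end Sites

section BracketNorm

noncomputable def siteGradNorm (p : Pol N) (j : Fin N) : ℝ :=
  pnorm (pderiv (Sum.inl j) p) + pnorm (pderiv (Sum.inr j) p)

lemma siteGradNorm_nonneg (p : Pol N) (j : Fin N) : 0 ≤ siteGradNorm p j :=
  add_nonneg (pnorm_nonneg _) (pnorm_nonneg _)

lemma sum_siteGradNorm_le {r : ℕ} {p : Pol N} (hp : p.IsHomogeneous r) :
    ∑ j, siteGradNorm p j ≤ r * pnorm p := by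
  have h := sum_pnorm_pderiv_le hp
  rw [Fintype.sum_sum_type] at h
  simpa only [siteGradNorm, sum_add_distrib] using h

lemma pnorm_pbracket_siteRename_le {π : Fin N → Fin N} (hπ : π.Bijective) (p q : Pol N) :
    pnorm (pbracket p (siteRename π q)) ≤ ∑ i, siteGradNorm p (π i) * siteGradNorm q i := by
  refine (pnorm_sum_le _ _).trans ?_
  rw [← hπ.sum_comp]
  refine sum_le_sum fun i _ => ?_
  obtain ⟨hx, hy⟩ := pderiv_siteRename hπ.injective q i
  rw [hx, hy]
  calc _ ≤ pnorm (pderiv (Sum.inl (π i)) p) * pnorm (siteRename π (pderiv (Sum.inr i) q)) +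
          pnorm (pderiv (Sum.inr (π i)) p) * pnorm (siteRename π (pderiv (Sum.inl i) q)) :=
        (pnorm_sub_le _ _).trans (add_le_add (pnorm_mul_le _ _) (pnorm_mul_le _ _))
    _ ≤ pnorm (pderiv (Sum.inl (π i)) p) * pnorm (pderiv (Sum.inr i) q) +
          pnorm (pderiv (Sum.inr (π i)) p) * pnorm (pderiv (Sum.inl i) q) :=
        add_le_add (mul_le_mul_of_nonneg_left (pnorm_rename_le _ _) (pnorm_nonneg _))
          (mul_le_mul_of_nonneg_left (pnorm_rename_le _ _) (pnorm_nonneg _))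
    _ ≤ siteGradNorm p (π i) * siteGradNorm q i := by
        simp only [siteGradNorm]
        nlinarith [mul_nonneg (pnorm_nonneg (pderiv (Sum.inl (π i)) p))
            (pnorm_nonneg (pderiv (Sum.inl i) q)),
          mul_nonneg (pnorm_nonneg (pderiv (Sum.inr (π i)) p))
            (pnorm_nonneg (pderiv (Sum.inr i) q))]

lemma sum_range_finRotate_iterate {M : Type*} [AddCommMonoid M] (A : Fin N → M) (i : Fin N) :
    ∑ l ∈ range N, A ((finRotate N)^[l] i) = ∑ j, A j := by
  cases N with
  | zero => exact i.elim0
  | succ n =>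
    simp_rw [finRotate_iterate_apply]
    rw [← Fin.sum_univ_eq_sum_range (fun l => A (i + l))]
    simp_rw [Fin.cast_val_eq_self]
    exact Fintype.sum_equiv (Equiv.addLeft i) _ _ fun _ => rfl

/-- Each site of `p` meets each site of `q` for exactly one relative shift `l`. -/
lemma sum_pnorm_pbracket_cshiftP_iterate_le {r s : ℕ} {p q : Pol N} (hp : p.IsHomogeneous r)
    (hq : q.IsHomogeneous s) :
    ∑ l ∈ range N, pnorm (pbracket p (cshiftP^[l] q)) ≤ r * s * pnorm p * pnorm q := by
  calc ∑ l ∈ range N, pnorm (pbracket p (cshiftP^[l] q))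
      ≤ ∑ l ∈ range N, ∑ i, siteGradNorm p ((finRotate N)^[l] i) * siteGradNorm q i :=
        sum_le_sum fun l _ => by
          rw [cshiftP_iterate]
          exact pnorm_pbracket_siteRename_le (finRotate_iterate_bijective l) p q
    _ = (∑ j, siteGradNorm p j) * ∑ i, siteGradNorm q i := by
        rw [sum_comm, mul_sum]
        simp_rw [← sum_mul, sum_range_finRotate_iterate]
    _ ≤ (r * pnorm p) * (s * pnorm q) :=
        mul_le_mul (sum_siteGradNorm_le hp) (sum_siteGradNorm_le hq)
          (sum_nonneg fun i _ => siteGradNorm_nonneg q i)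
          (mul_nonneg (Nat.cast_nonneg r) (pnorm_nonneg p))
    _ = r * s * pnorm p * pnorm q := by ring

end BracketNorm

section Components

noncomputable def alignedBracket (p q : Pol N) (a : ℕ) : Pol N :=
  ∑ l ∈ range N, cshiftP^[alignShift N a l] (pbracket p (cshiftP^[l] q))

lemma oplus_alignedBracket (p q : Pol N) (a : ℕ) :
    oplus (alignedBracket p q a) = oplus (∑ l ∈ range N, pbracket p (cshiftP^[l] q)) := by
  simp_rw [alignedBracket, oplus_sum, oplus_cshiftP_iterate]

lemma pnorm_alignedBracket_le {r s : ℕ} {p q : Pol N} (hp : p.IsHomogeneous r)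
    (hq : q.IsHomogeneous s) (a : ℕ) :
    pnorm (alignedBracket p q a) ≤ r * s * pnorm p * pnorm q := by
  refine (pnorm_sum_le _ _).trans (le_trans (sum_le_sum fun l _ => ?_)
    (sum_pnorm_pbracket_cshiftP_iterate_le hp hq))
  rw [cshiftP_iterate]
  exact pnorm_rename_le _ _

lemma alignedBracket_mem {a b : ℕ} (hab : a + b < N) {p q : Pol N}
    (hp : p ∈ sitesSupported (Fin.val ⁻¹' Set.Icc 0 a))
    (hq : q ∈ sitesSupported (Fin.val ⁻¹' Set.Icc 0 b)) :
    alignedBracket p q a ∈ sitesSupported (Fin.val ⁻¹' Set.Icc 0 (a + b)) :=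
  sum_mem fun _ hl => cshiftP_alignShift_pbracket_mem hab (mem_range.mp hl) hp hq

def rangePairs (N m : ℕ) : Finset (ℕ × ℕ) :=
  (range (N + 1) ×ˢ range (N + 1)).filter fun ab => min (ab.1 + ab.2) N = m

noncomputable def bracketComponent (F G : ℕ → Pol N) (m : ℕ) : Pol N :=
  ∑ ab ∈ rangePairs N m, alignedBracket (F ab.1) (G ab.2) ab.1

lemma oplus_sum_bracketComponent {f g : Pol N} {F G : ℕ → Pol N}
    (hf : f = ∑ a ∈ range (N + 1), F a) (hg : g = ∑ b ∈ range (N + 1), G b) :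
    oplus (∑ m ∈ range (N + 1), bracketComponent F G m) = pbracket (oplus f) (oplus g) := by
  have hfib := sum_fiberwise_of_maps_to (s := range (N + 1) ×ˢ range (N + 1))
    (t := range (N + 1)) (g := fun ab => min (ab.1 + ab.2) N)
    (fun _ _ => mem_range.mpr (Nat.lt_succ_of_le (min_le_right _ _)))
    (fun ab => oplus (alignedBracket (F ab.1) (G ab.2) ab.1))
  simp_rw [oplus_sum, bracketComponent, oplus_sum]
  refine hfib.trans ?_
  rw [sum_product, pbracket_oplus_oplus, hf, hg]
  simp_rw [oplus_alignedBracket, pbracket_sum_left, cshiftP_iterate, map_sum, pbracket_sum_right,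
    oplus_sum]
  exact (sum_congr rfl fun _ _ => sum_comm).trans sum_comm

lemma rangeLE_bracketComponent {F G : ℕ → Pol N} (hF : ∀ a, RangeLE a (F a))
    (hG : ∀ b, RangeLE b (G b)) (m : ℕ) : RangeLE m (bracketComponent F G m) := by
  rcases lt_or_ge m N with hm | hm
  · rw [rangeLE_iff_mem_sitesSupported]
    refine sum_mem fun ab hab => ?_
    have hm' : ab.1 + ab.2 = m := by
      simp only [rangePairs, mem_filter] at hab
      omega
    rw [← hm']
    exact alignedBracket_mem (by omega) (rangeLE_iff_mem_sitesSupported.mp (hF _))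
      (rangeLE_iff_mem_sitesSupported.mp (hG _))
  · exact fun _ _ j _ => j.isLt.le.trans hm

lemma pnorm_bracketComponent_le {r s : ℕ} {F G : ℕ → Pol N} (hF : ∀ a, (F a).IsHomogeneous r)
    (hG : ∀ b, (G b).IsHomogeneous s) (m : ℕ) :
    pnorm (bracketComponent F G m) ≤
      ∑ ab ∈ rangePairs N m, r * s * pnorm (F ab.1) * pnorm (G ab.2) :=
  (pnorm_sum_le _ _).trans (sum_le_sum fun _ _ => pnorm_alignedBracket_le (hF _) (hG _) _)

end Components

section Geometric

open Real

lemma sum_rangePairs_pow_le {x y : ℝ} (hy : 0 < y) (hy1 : y < 1) (hyx : y < x) (N m : ℕ) :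
    ∑ ab ∈ rangePairs N m, x ^ ab.1 * y ^ ab.2 ≤ x ^ m / ((1 - y) * (1 - y / x)) := by
  have hx : 0 < x := hy.trans hyx
  have hsub : rangePairs N m ⊆
      (range (m + 1) ×ˢ range (N + 1)).filter fun ab => m ≤ ab.1 + ab.2 := by
    intro ab hab
    simp only [rangePairs, mem_filter, mem_product, mem_range] at hab ⊢
    omega
  have htail (a : ℕ) :
      ∑ b ∈ (range (N + 1)).filter (fun b => m ≤ a + b), y ^ b ≤ y ^ (m - a) / (1 - y) := by
    refine le_trans (sum_le_sum_of_subset_of_nonneg (fun b hb => ?_) fun _ _ _ => by positivity)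
      (geom_sum_Ico_le_of_lt_one (n := N + 1) hy.le hy1)
    simp only [mem_filter, mem_range, mem_Ico] at hb ⊢
    omega
  have hdiag : ∑ a ∈ range (m + 1), x ^ a * y ^ (m - a) ≤ x ^ (m + 1) / (x - y) := by
    have h := geom_sum₂_mul x y (m + 1)
    simp only [Nat.add_sub_cancel] at h
    rw [le_div_iff₀ (sub_pos.mpr hyx), h]
    linarith [pow_pos hy (m + 1)]
  calc ∑ ab ∈ rangePairs N m, x ^ ab.1 * y ^ ab.2
      ≤ ∑ ab ∈ (range (m + 1) ×ˢ range (N + 1)).filter (fun ab => m ≤ ab.1 + ab.2),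
          x ^ ab.1 * y ^ ab.2 :=
        sum_le_sum_of_subset_of_nonneg hsub fun _ _ _ => by positivity
    _ = ∑ a ∈ range (m + 1), x ^ a * ∑ b ∈ (range (N + 1)).filter (fun b => m ≤ a + b), y ^ b := by
        rw [sum_filter, sum_product]
        refine sum_congr rfl fun a _ => ?_
        rw [sum_filter, mul_sum]
        exact sum_congr rfl fun b _ => by split_ifs <;> simp
    _ ≤ ∑ a ∈ range (m + 1), x ^ a * (y ^ (m - a) / (1 - y)) :=
        sum_le_sum fun a _ => mul_le_mul_of_nonneg_left (htail a) (by positivity)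
    _ = (∑ a ∈ range (m + 1), x ^ a * y ^ (m - a)) / (1 - y) := by
        rw [sum_div]
        simp_rw [mul_div_assoc]
    _ ≤ x ^ (m + 1) / (x - y) / (1 - y) :=
        div_le_div_of_nonneg_right hdiag (sub_pos.mpr hy1).le
    _ = x ^ m / ((1 - y) * (1 - y / x)) := by
        have : x - y ≠ 0 := (sub_pos.mpr hyx).ne'
        have : 1 - y ≠ 0 := (sub_pos.mpr hy1).ne'
        field_simp
        ring

lemma exp_neg_mul_natCast (σ : ℝ) (k : ℕ) : exp (-σ * k) = exp (-σ) ^ k := by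
  rw [mul_comm, exp_nat_mul]

lemma sum_rangePairs_exp_le {σ τ : ℝ} (hpos : 0 < max σ τ) (hne : σ ≠ τ) (N m : ℕ) :
    ∑ ab ∈ rangePairs N m, exp (-σ * ab.1) * exp (-τ * ab.2) ≤
      exp (-min σ τ * m) / ((1 - exp (-max σ τ)) * (1 - exp (-|σ - τ|))) := by
  wlog hlt : σ < τ generalizing σ τ
  · have h := this (max_comm σ τ ▸ hpos) hne.symm (lt_of_le_of_ne (not_lt.mp hlt) hne.symm)
    rw [min_comm, max_comm, abs_sub_comm]
    refine le_of_eq_of_le (sum_equiv (Equiv.prodComm ℕ ℕ) (fun ab => ?_) fun _ _ => mul_comm _ _) h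
    simp only [rangePairs, mem_filter, mem_product, Equiv.prodComm_apply, Prod.fst_swap,
      Prod.snd_swap, add_comm]
    tauto
  have hτ : 0 < τ := by rwa [max_eq_right hlt.le] at hpos
  have hratio : exp (-|σ - τ|) = exp (-τ) / exp (-σ) := by
    rw [abs_of_neg (sub_neg.mpr hlt), ← exp_sub]
    ring_nf
  rw [min_eq_left hlt.le, max_eq_right hlt.le, hratio, exp_neg_mul_natCast]
  simp_rw [exp_neg_mul_natCast]
  exact sum_rangePairs_pow_le (exp_pos _) (exp_lt_one_iff.mpr (by linarith))
    (exp_lt_exp.mpr (by linarith)) N m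

end Geometric

lemma exists_homogeneous_decomp {C σ : ℝ} {r : ℕ} {f : Pol N} (hf : f.IsHomogeneous r)
    (hD : SeedClassD C σ f) :
    ∃ F : ℕ → Pol N, IsDecomp f F ∧ Decay C σ F ∧ ∀ a, (F a).IsHomogeneous r := by
  obtain ⟨F, ⟨hsum, hrange⟩, hdecay⟩ := hD
  refine ⟨fun a => homogeneousComponent r (F a), ⟨?_, fun a => ?_⟩,
    fun a => (pnorm_homogeneousComponent_le r _).trans (hdecay a),
    fun a => homogeneousComponent_isHomogeneous r _⟩
  · rw [← map_sum, ← hsum, homogeneousComponent_eq_self hf]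
  · exact rangeLE_iff_mem_sitesSupported.mpr
      (homogeneousComponent_mem_supported (rangeLE_iff_mem_sitesSupported.mp (hrange a)) r)

end PoissonSeed

open PoissonSeed Finset

theorem stmt5 (N : ℕ) (r' r'' : ℕ) (f g : Pol N) (Cf Cg σ' σ'' : ℝ)
    (hf : f.IsHomogeneous r') (hg : g.IsHomogeneous r'')
    (hσ' : 0 < σ')
    (hfD : SeedClassD Cf σ' f) (hgD : SeedClassD Cg σ'' g)
    (hne : σ' ≠ σ'') :
    ∃ h : Pol N, oplus h = pbracket (oplus f) (oplus g) ∧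
      SeedClassD ((r' : ℝ) * r'' * Cf * Cg /
          ((1 - Real.exp (-(max σ' σ''))) * (1 - Real.exp (-|σ' - σ''|))))
        (min σ' σ'') h := by
  obtain ⟨F, hF, hFdecay, hFhom⟩ := exists_homogeneous_decomp hf hfD
  obtain ⟨G, hG, hGdecay, hGhom⟩ := exists_homogeneous_decomp hg hgD
  have hCf : 0 ≤ Cf := by simpa using (pnorm_nonneg _).trans (hFdecay 0)
  have hCg : 0 ≤ Cg := by simpa using (pnorm_nonneg _).trans (hGdecay 0)
  refine ⟨∑ m ∈ range (N + 1), bracketComponent F G m, oplus_sum_bracketComponent hF.1 hG.1,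
    bracketComponent F G, ⟨rfl, rangeLE_bracketComponent hF.2 hG.2⟩, fun m => ?_⟩
  calc pnorm (bracketComponent F G m)
      ≤ ∑ ab ∈ rangePairs N m, r' * r'' * pnorm (F ab.1) * pnorm (G ab.2) :=
        pnorm_bracketComponent_le hFhom hGhom m
    _ ≤ ∑ ab ∈ rangePairs N m,
          r' * r'' * (Cf * Real.exp (-σ' * ab.1)) * (Cg * Real.exp (-σ'' * ab.2)) := by
        gcongr with ab
        · exact pnorm_nonneg _
        · exact hFdecay _
        · exact hGdecay _
    _ = r' * r'' * Cf * Cg *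
          ∑ ab ∈ rangePairs N m, Real.exp (-σ' * ab.1) * Real.exp (-σ'' * ab.2) := by
        rw [mul_sum]
        exact sum_congr rfl fun _ _ => by ring
    _ ≤ r' * r'' * Cf * Cg * (Real.exp (-min σ' σ'' * m) /
          ((1 - Real.exp (-(max σ' σ''))) * (1 - Real.exp (-|σ' - σ''|)))) := by
        gcongr
        exact sum_rangePairs_exp_le (lt_max_of_lt_left hσ') hne N m
    _ = _ := by ring
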